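/- Let P be an invertible complex 6×6 matrix. Then P·J_x·Pᵗ = J_x and P·J_z·Pᵗ = J_z hold if and only if, writing P in 3×3 blocks, P equals [[P1, P2],[P3, P1⁻¹ + P3·P1⁻¹·P2]] or [[P2, P1],[−P1⁻¹ + P3·P1⁻¹·P2, P3]], where P1 is invertible and each Pi (i = 1,2,3) is an upper-triangular Toeplitz matrix of the form [[p_{i1}, p_{i2}, p_{i3}],[0, p_{i1}, p_{i2}],[0, 0, p_{i1}]]. -/
import Mathlib

open Matrix

/-- The skew-symmetric 6×6 matrix `J_x` with above-diagonal entries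
`(1,6) = (2,5) = (3,4) = 1` and all other above-diagonal entries `0`. -/
noncomputable def Jx : Matrix (Fin 6) (Fin 6) ℂ :=
  !![0, 0, 0, 0, 0, 1;
     0, 0, 0, 0, 1, 0;
     0, 0, 0, 1, 0, 0;
     0, 0, -1, 0, 0, 0;
     0, -1, 0, 0, 0, 0;
     -1, 0, 0, 0, 0, 0]

/-- The skew-symmetric 6×6 matrix `J_z` with above-diagonal entries
`(1,5) = (2,4) = 1` and all other above-diagonal entries `0`. -/
noncomputable def Jz : Matrix (Fin 6) (Fin 6) ℂ :=
  !![0, 0, 0, 0, 1, 0;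
     0, 0, 0, 1, 0, 0;
     0, 0, 0, 0, 0, 0;
     0, -1, 0, 0, 0, 0;
     -1, 0, 0, 0, 0, 0;
     0, 0, 0, 0, 0, 0]

/-- A 6×6 matrix built out of four 3×3 blocks. -/
noncomputable def blk (A B C D : Matrix (Fin 3) (Fin 3) ℂ) : Matrix (Fin 6) (Fin 6) ℂ :=
  Matrix.reindex finSumFinEquiv finSumFinEquiv (Matrix.fromBlocks A B C D)

/-- The upper-triangular Toeplitz matrix `[[a,b,c],[0,a,b],[0,0,a]]`. -/
noncomputable def UT (a b c : ℂ) : Matrix (Fin 3) (Fin 3) ℂ :=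
  !![a, b, c; 0, a, b; 0, 0, a]

noncomputable def I3 : Matrix (Fin 3) (Fin 3) ℂ := !![0,0,1;0,1,0;1,0,0]
noncomputable def N3 : Matrix (Fin 3) (Fin 3) ℂ := !![0,1,0;1,0,0;0,0,0]

lemma UT_ext {a b c d e f : ℂ} (h1 : a = d) (h2 : b = e) (h3 : c = f) : UT a b c = UT d e f := by
  rw [h1,h2,h3]

lemma UT_mul (a b c d e f : ℂ) : UT a b c * UT d e f = UT (a*d) (a*e+b*d) (a*f+b*e+c*d) := by
  ext i j
  fin_cases i <;> fin_cases j <;>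
    simp [Matrix.vecHead, Matrix.vecTail, UT, Matrix.mul_apply, Fin.sum_univ_three]

lemma UT_add (a b c d e f : ℂ) : UT a b c + UT d e f = UT (a+d) (b+e) (c+f) := by
  ext i j; fin_cases i <;> fin_cases j <;> simp [Matrix.vecHead, Matrix.vecTail, UT]

lemma UT_sub (a b c d e f : ℂ) : UT a b c - UT d e f = UT (a-d) (b-e) (c-f) := by
  ext i j; fin_cases i <;> fin_cases j <;> simp [Matrix.vecHead, Matrix.vecTail, UT]

lemma UT_neg (a b c : ℂ) : -UT a b c = UT (-a) (-b) (-c) := by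
  ext i j; fin_cases i <;> fin_cases j <;> simp [Matrix.vecHead, Matrix.vecTail, UT]

lemma UT_one : (1 : Matrix (Fin 3) (Fin 3) ℂ) = UT 1 0 0 := by
  ext i j; fin_cases i <;> fin_cases j <;>
    simp [Matrix.vecHead, Matrix.vecTail, UT, Matrix.one_apply]

lemma UT_zero : UT 0 0 0 = (0 : Matrix (Fin 3) (Fin 3) ℂ) := by
  ext i j; fin_cases i <;> fin_cases j <;> simp [Matrix.vecHead, Matrix.vecTail, UT]

lemma UT_negone : (-1 : Matrix (Fin 3) (Fin 3) ℂ) = UT (-1) 0 0 := by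
  rw [UT_one, UT_neg]; norm_num

lemma UT_inj {a b c d e f : ℂ} (h : UT a b c = UT d e f) : a = d ∧ b = e ∧ c = f := by
  refine ⟨?_, ?_, ?_⟩
  · have := congrFun (congrFun h 0) 0; simpa [Matrix.vecHead, Matrix.vecTail, UT] using this
  · have := congrFun (congrFun h 0) 1; simpa [Matrix.vecHead, Matrix.vecTail, UT] using this
  · have := congrFun (congrFun h 0) 2; simpa [Matrix.vecHead, Matrix.vecTail, UT] using this

lemma UT_comm (a b c d e f : ℂ) : UT a b c * UT d e f = UT d e f * UT a b c := by
  rw [UT_mul, UT_mul]; exact UT_ext (by ring) (by ring) (by ring)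

lemma UT_I3 (a b c : ℂ) : I3 * (UT a b c)ᵀ = UT a b c * I3 := by
  ext i j; fin_cases i <;> fin_cases j <;>
    simp [Matrix.vecHead, Matrix.vecTail, UT, I3, Matrix.mul_apply, Fin.sum_univ_three]

lemma UT_N3 (a b c : ℂ) : N3 * (UT a b c)ᵀ = UT 0 a b * I3 := by
  ext i j; fin_cases i <;> fin_cases j <;>
    simp [Matrix.vecHead, Matrix.vecTail, UT, I3, N3, Matrix.mul_apply, Fin.sum_univ_three]

lemma I3_I3 : I3 * I3 = 1 := by
  ext i j; fin_cases i <;> fin_cases j <;>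
    simp [Matrix.vecHead, Matrix.vecTail, I3, Matrix.mul_apply, Fin.sum_univ_three,
      Matrix.one_apply]

lemma N3_I3 : N3 * I3 = UT 0 1 0 := by
  ext i j; fin_cases i <;> fin_cases j <;>
    simp [Matrix.vecHead, Matrix.vecTail, I3, N3, UT, Matrix.mul_apply, Fin.sum_univ_three]

lemma z_I3 : UT 0 0 0 * I3 = 0 := by rw [UT_zero, Matrix.zero_mul]

lemma o_I3 : UT 1 0 0 * I3 = I3 := by rw [← UT_one, Matrix.one_mul]

lemma no_I3 : UT (-1) 0 0 * I3 = -I3 := by rw [← UT_negone, Matrix.neg_mul, Matrix.one_mul]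

lemma s_I3 : UT 0 1 0 * I3 = N3 := by
  ext i j; fin_cases i <;> fin_cases j <;>
    simp [Matrix.vecHead, Matrix.vecTail, I3, N3, UT, Matrix.mul_apply, Fin.sum_univ_three]

lemma ns_I3 : UT 0 (-1) 0 * I3 = -N3 := by
  have : UT 0 (-1) 0 = -(UT 0 1 0) := by rw [UT_neg]; norm_num
  rw [this, Matrix.neg_mul, s_I3]

lemma det_UT (a b c : ℂ) : (UT a b c).det = a^3 := by
  simp [UT, Matrix.det_fin_three, Matrix.vecHead, Matrix.vecTail]; ring

lemma isUnit_UT {a b c : ℂ} : IsUnit (UT a b c) ↔ a ≠ 0 := by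
  rw [Matrix.isUnit_iff_isUnit_det, det_UT, isUnit_iff_ne_zero]
  simp [pow_eq_zero_iff]

lemma UT_inv {a : ℂ} (ha : a ≠ 0) (b c : ℂ) :
    (UT a b c)⁻¹ = UT a⁻¹ (-(b/a^2)) ((b^2 - a*c)/a^3) := by
  apply Matrix.inv_eq_right_inv
  rw [UT_mul, UT_one]
  exact UT_ext (by field_simp) (by field_simp; ring) (by field_simp; ring)

lemma blk_mul (A B C D E F G H : Matrix (Fin 3) (Fin 3) ℂ) :
    blk A B C D * blk E F G H = blk (A*E + B*G) (A*F + B*H) (C*E + D*G) (C*F + D*H) := by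
  simp only [blk, Matrix.reindex_apply, Matrix.submatrix_mul_equiv, Matrix.fromBlocks_multiply]

lemma blk_transpose (A B C D : Matrix (Fin 3) (Fin 3) ℂ) :
    (blk A B C D)ᵀ = blk Aᵀ Cᵀ Bᵀ Dᵀ := by
  simp only [blk, Matrix.reindex_apply, Matrix.transpose_submatrix, Matrix.fromBlocks_transpose]

lemma blk_inj_iff {A B C D E F G H : Matrix (Fin 3) (Fin 3) ℂ} :
    blk A B C D = blk E F G H ↔ A = E ∧ B = F ∧ C = G ∧ D = H := by
  unfold blk
  rw [Equiv.apply_eq_iff_eq, Matrix.fromBlocks_inj]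

lemma Jx_blk : Jx = blk 0 I3 (-I3) 0 := by
  ext i j
  fin_cases i <;> fin_cases j <;>
    simp [Jx, blk, I3, Matrix.fromBlocks, finSumFinEquiv, Matrix.vecHead, Matrix.vecTail,
      Fin.addCases, Equiv.symm] <;> rfl

lemma Jz_blk : Jz = blk 0 N3 (-N3) 0 := by
  ext i j
  fin_cases i <;> fin_cases j <;>
    simp [Jz, blk, N3, Matrix.fromBlocks, finSumFinEquiv, Matrix.vecHead, Matrix.vecTail,
      Fin.addCases, Equiv.symm] <;> rfl

noncomputable def toB (P : Matrix (Fin 6) (Fin 6) ℂ) :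
    Matrix (Fin 3 ⊕ Fin 3) (Fin 3 ⊕ Fin 3) ℂ :=
  P.submatrix (finSumFinEquiv (m := 3) (n := 3)) (finSumFinEquiv (m := 3) (n := 3))

lemma blk_toB (P : Matrix (Fin 6) (Fin 6) ℂ) :
    P = blk (toB P).toBlocks₁₁ (toB P).toBlocks₁₂ (toB P).toBlocks₂₁ (toB P).toBlocks₂₂ := by
  rw [blk, Matrix.fromBlocks_toBlocks]
  ext i j
  simp [toB, Matrix.reindex_apply]

lemma comm_UT {X : Matrix (Fin 3) (Fin 3) ℂ} (hc : X * UT 0 (-1) 0 = UT 0 (-1) 0 * X) :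
    ∃ a b c, X = UT a b c := by
  refine ⟨X 0 0, X 0 1, X 0 2, ?_⟩
  have e := fun p q => congrFun (congrFun hc p) q
  have h00 := e 0 0; have h01 := e 0 1; have h02 := e 0 2
  have h10 := e 1 0; have h11 := e 1 1; have h12 := e 1 2
  simp [UT, Matrix.mul_apply, Fin.sum_univ_three, Matrix.vecHead, Matrix.vecTail]
    at h00 h01 h02 h10 h11 h12
  ext p q
  fin_cases p <;> fin_cases q <;> simp [UT, Matrix.vecHead, Matrix.vecTail]
  · exact h00
  · exact h01.symm
  · exact h02.symm
  · exact h10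
  · exact h11.symm.trans h00
  · exact h12.symm.trans h01.symm

lemma blk_one : blk 1 0 0 1 = (1 : Matrix (Fin 6) (Fin 6) ℂ) := by
  rw [blk, Matrix.fromBlocks_one]
  simp [Matrix.reindex_apply, Matrix.submatrix_one_equiv]

lemma blk_neg (A B C D : Matrix (Fin 3) (Fin 3) ℂ) :
    -blk A B C D = blk (-A) (-B) (-C) (-D) := by
  ext i j
  simp [blk, Matrix.reindex_apply, Matrix.submatrix_apply, ← Matrix.fromBlocks_neg]

/-- Main symplectic computation at the level of UT blocks. -/
lemma sympl (a b c e f g : ℂ) (C D : Matrix (Fin 3) (Fin 3) ℂ)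
    (hC : ∃ x y z, C = UT x y z) (hD : ∃ x y z, D = UT x y z)
    (hrel : UT a b c * D - UT e f g * C = 1) :
    blk (UT a b c) (UT e f g) C D * Jx *
      (blk (UT a b c) (UT e f g) C D)ᵀ = Jx ∧
    blk (UT a b c) (UT e f g) C D * Jz *
      (blk (UT a b c) (UT e f g) C D)ᵀ = Jz := by
  obtain ⟨h, i, j, rfl⟩ := hC
  obtain ⟨k, l, m, rfl⟩ := hD
  rw [UT_mul, UT_mul, UT_sub, UT_one] at hrel
  obtain ⟨e1, e2, e3⟩ := UT_inj hrel
  constructor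
  · rw [Jx_blk, blk_transpose, blk_mul, blk_mul, blk_inj_iff]
    refine ⟨?_, ?_, ?_, ?_⟩ <;>
      simp only [mul_zero, zero_mul, add_zero, zero_add, mul_neg, neg_mul, mul_assoc, UT_I3] <;>
      simp only [← mul_assoc, UT_mul] <;>
      simp only [← neg_mul, UT_neg, ← add_mul, UT_add]
    · conv_rhs => rw [← z_I3]
      refine congrArg (· * I3) (UT_ext ?_ ?_ ?_)
      · ring
      · ring
      · ring
    · conv_rhs => rw [← o_I3]
      refine congrArg (· * I3) (UT_ext ?_ ?_ ?_)
      · linear_combination e1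
      · linear_combination e2
      · linear_combination e3
    · conv_rhs => rw [← no_I3]
      refine congrArg (· * I3) (UT_ext ?_ ?_ ?_)
      · linear_combination -e1
      · linear_combination -e2
      · linear_combination -e3
    · conv_rhs => rw [← z_I3]
      refine congrArg (· * I3) (UT_ext ?_ ?_ ?_)
      · ring
      · ring
      · ring
  · rw [Jz_blk, blk_transpose, blk_mul, blk_mul, blk_inj_iff]
    refine ⟨?_, ?_, ?_, ?_⟩ <;>
      simp only [mul_zero, zero_mul, add_zero, zero_add, mul_neg, neg_mul, mul_assoc, UT_N3] <;>
      simp only [← mul_assoc, UT_mul] <;>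
      simp only [← neg_mul, UT_neg, ← add_mul, UT_add]
    · conv_rhs => rw [← z_I3]
      refine congrArg (· * I3) (UT_ext ?_ ?_ ?_)
      · ring
      · ring
      · ring
    · conv_rhs => rw [← s_I3]
      refine congrArg (· * I3) (UT_ext ?_ ?_ ?_)
      · ring
      · linear_combination e1
      · linear_combination e2
    · conv_rhs => rw [← ns_I3]
      refine congrArg (· * I3) (UT_ext ?_ ?_ ?_)
      · ring
      · linear_combination -e1
      · linear_combination -e2
    · conv_rhs => rw [← z_I3]
      refine congrArg (· * I3) (UT_ext ?_ ?_ ?_)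
      · ring
      · ring
      · ring

lemma solveD {a : ℂ} (ha : a ≠ 0) (b c e f g h i j : ℂ) (D : Matrix (Fin 3) (Fin 3) ℂ)
    (hAD : UT a b c * D = 1 + UT h i j * UT e f g) :
    D = (UT a b c)⁻¹ + UT h i j * (UT a b c)⁻¹ * UT e f g := by
  have hU : IsUnit (UT a b c) := isUnit_UT.mpr ha
  have hinv : (UT a b c)⁻¹ * UT a b c = 1 :=
    Matrix.nonsing_inv_mul _ ((Matrix.isUnit_iff_isUnit_det _).mp hU)
  calc D = (UT a b c)⁻¹ * (UT a b c * D) := by rw [← mul_assoc, hinv, one_mul]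
    _ = (UT a b c)⁻¹ + (UT a b c)⁻¹ * UT h i j * UT e f g := by
        rw [hAD, mul_add, mul_one, ← mul_assoc]
    _ = (UT a b c)⁻¹ + UT h i j * (UT a b c)⁻¹ * UT e f g := by
        rw [UT_inv ha, UT_comm (a⁻¹) (-(b/a^2)) ((b^2 - a*c)/a^3) h i j]

lemma solveC {e : ℂ} (he : e ≠ 0) (f g a b c k l m : ℂ) (C : Matrix (Fin 3) (Fin 3) ℂ)
    (hBC : UT e f g * C = -1 + UT k l m * UT a b c) :
    C = -(UT e f g)⁻¹ + UT k l m * (UT e f g)⁻¹ * UT a b c := by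
  have hU : IsUnit (UT e f g) := isUnit_UT.mpr he
  have hinv : (UT e f g)⁻¹ * UT e f g = 1 :=
    Matrix.nonsing_inv_mul _ ((Matrix.isUnit_iff_isUnit_det _).mp hU)
  calc C = (UT e f g)⁻¹ * (UT e f g * C) := by rw [← mul_assoc, hinv, one_mul]
    _ = -(UT e f g)⁻¹ + (UT e f g)⁻¹ * UT k l m * UT a b c := by
        rw [hBC, mul_add, mul_neg_one, ← mul_assoc]
    _ = -(UT e f g)⁻¹ + UT k l m * (UT e f g)⁻¹ * UT a b c := by
        rw [UT_inv he, UT_comm (e⁻¹) (-(f/e^2)) ((f^2 - e*g)/e^3) k l m]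

theorem stmt_8 (P : Matrix (Fin 6) (Fin 6) ℂ) (hP : IsUnit P) :
    (P * Jx * Pᵀ = Jx ∧ P * Jz * Pᵀ = Jz) ↔
      ∃ P1 P2 P3 : Matrix (Fin 3) (Fin 3) ℂ,
        (∃ a b c : ℂ, P1 = UT a b c) ∧ (∃ a b c : ℂ, P2 = UT a b c) ∧
        (∃ a b c : ℂ, P3 = UT a b c) ∧ IsUnit P1 ∧
        (P = blk P1 P2 P3 (P1⁻¹ + P3 * P1⁻¹ * P2) ∨
         P = blk P2 P1 (-P1⁻¹ + P3 * P1⁻¹ * P2) P3) := by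
  constructor
  · rintro ⟨h1, h2⟩
    -- P is invertible
    have hdet : IsUnit P.det := (Matrix.isUnit_iff_isUnit_det P).mp hP
    have hPl : P⁻¹ * P = 1 := Matrix.nonsing_inv_mul P hdet
    have hJx2 : Jx * Jx = -1 := by
      rw [Jx_blk, blk_mul, ← blk_one, blk_neg]
      simp only [mul_zero, zero_mul, add_zero, zero_add, mul_neg, neg_mul, I3_I3]
      norm_num
    have step1 : Jx * Pᵀ = P⁻¹ * Jx := by
      calc Jx * Pᵀ = (P⁻¹ * P) * (Jx * Pᵀ) := by rw [hPl, one_mul]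
        _ = P⁻¹ * (P * Jx * Pᵀ) := by rw [mul_assoc, mul_assoc]
        _ = P⁻¹ * Jx := by rw [h1]
    have h1T : Pᵀ * (Jx * P) = Jx := by
      have hPTeq : Pᵀ = -(Jx * (P⁻¹ * Jx)) := by
        calc Pᵀ = -((Jx * Jx) * Pᵀ) := by rw [hJx2, neg_one_mul, neg_neg]
          _ = -(Jx * (P⁻¹ * Jx)) := by rw [mul_assoc, step1]
      calc Pᵀ * (Jx * P) = -(Jx * (P⁻¹ * Jx)) * (Jx * P) := by rw [hPTeq]
        _ = -(Jx * (P⁻¹ * (Jx * (Jx * P)))) := by simp only [neg_mul, mul_assoc]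
        _ = Jx := by
            rw [← mul_assoc Jx Jx P, hJx2, neg_one_mul, mul_neg, hPl, mul_neg, mul_one,
              neg_neg]
    have hcomm : blk (UT 0 (-1) 0) 0 0 (UT 0 (-1) 0) * P
        = P * blk (UT 0 (-1) 0) 0 0 (UT 0 (-1) 0) := by
      have hM : Jz * Jx = blk (UT 0 (-1) 0) 0 0 (UT 0 (-1) 0) := by
        rw [Jz_blk, Jx_blk, blk_mul]
        simp only [mul_zero, zero_mul, add_zero, zero_add, mul_neg, neg_mul, N3_I3]
        rw [UT_neg]
        norm_num
      rw [← hM]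
      calc (Jz * Jx) * P = Jz * (Jx * P) := mul_assoc _ _ _
        _ = (P * Jz * Pᵀ) * (Jx * P) := by rw [h2]
        _ = (P * Jz) * (Pᵀ * (Jx * P)) := by rw [mul_assoc]
        _ = (P * Jz) * Jx := by rw [h1T]
        _ = P * (Jz * Jx) := by rw [mul_assoc]
    have hPdec := blk_toB P
    rw [hPdec, blk_mul, blk_mul, blk_inj_iff] at hcomm
    obtain ⟨c1, c2, c3, c4⟩ := hcomm
    simp only [mul_zero, zero_mul, add_zero, zero_add] at c1 c2 c3 c4
    obtain ⟨a, b, c, hA⟩ := comm_UT c1.symm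
    obtain ⟨e, f, g, hB⟩ := comm_UT c2.symm
    obtain ⟨h, i, j, hC⟩ := comm_UT c3.symm
    obtain ⟨k, l, m, hD⟩ := comm_UT c4.symm
    have hPblk : P = blk (UT a b c) (UT e f g) (UT h i j) (UT k l m) := by
      rw [← hA, ← hB, ← hC, ← hD]; exact hPdec
    rw [hPblk, Jx_blk, blk_transpose, blk_mul, blk_mul, blk_inj_iff] at h1
    obtain ⟨-, hTR, -, -⟩ := h1
    simp only [mul_zero, zero_mul, add_zero, zero_add, mul_neg, neg_mul, mul_assoc,
      UT_I3] at hTR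
    simp only [← mul_assoc, UT_mul] at hTR
    simp only [← neg_mul, UT_neg, ← add_mul, UT_add] at hTR
    have hscal := congrArg (· * I3) hTR
    simp only [mul_assoc, I3_I3, mul_one] at hscal
    rw [UT_one] at hscal
    obtain ⟨e1, e2, e3⟩ := UT_inj hscal
    by_cases ha : a = 0
    · subst ha
      have he : e ≠ 0 := by
        intro he0
        rw [he0] at e1
        simp at e1
      have hBC : UT e f g * UT h i j = -1 + UT k l m * UT 0 b c := by
        rw [UT_mul, UT_mul, UT_negone, UT_add]
        exact UT_ext (by linear_combination -e1) (by linear_combination -e2)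
          (by linear_combination -e3)
      have hsol := solveC he f g 0 b c k l m _ hBC
      exact ⟨UT e f g, UT 0 b c, UT k l m, ⟨e, f, g, rfl⟩, ⟨0, b, c, rfl⟩, ⟨k, l, m, rfl⟩,
        isUnit_UT.mpr he, Or.inr (by rw [hPblk, hsol])⟩
    · have hAD : UT a b c * UT k l m = 1 + UT h i j * UT e f g := by
        rw [UT_mul, UT_mul, UT_one, UT_add]
        exact UT_ext (by linear_combination e1) (by linear_combination e2)
          (by linear_combination e3)
      have hsol := solveD ha b c e f g h i j _ hAD
      exact ⟨UT a b c, UT e f g, UT h i j, ⟨a, b, c, rfl⟩, ⟨e, f, g, rfl⟩, ⟨h, i, j, rfl⟩,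
        isUnit_UT.mpr ha, Or.inl (by rw [hPblk, hsol])⟩
  · rintro ⟨P1, P2, P3, ⟨a, b, c, rfl⟩, ⟨e, f, g, rfl⟩, ⟨h, i, j, rfl⟩, hU, hc | hc⟩ <;>
      subst hc
    · have ha : a ≠ 0 := isUnit_UT.mp hU
      have hdet1 : IsUnit (UT a b c).det := (Matrix.isUnit_iff_isUnit_det _).mp hU
      have hA : UT a b c * (UT a b c)⁻¹ = 1 := Matrix.mul_nonsing_inv _ hdet1
      have hcm : UT h i j * (UT a b c)⁻¹ = (UT a b c)⁻¹ * UT h i j := by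
        rw [UT_inv ha]; exact UT_comm _ _ _ _ _ _
      have hAD : UT a b c * ((UT a b c)⁻¹ + UT h i j * (UT a b c)⁻¹ * UT e f g)
          = 1 + UT h i j * UT e f g := by
        rw [mul_add, hA]
        congr 1
        rw [hcm, ← mul_assoc, ← mul_assoc, hA, one_mul]
      have hrel : UT a b c * ((UT a b c)⁻¹ + UT h i j * (UT a b c)⁻¹ * UT e f g)
          - UT e f g * UT h i j = 1 := by
        rw [hAD, UT_comm e f g h i j, add_sub_cancel_right]
      have hDut : ∃ x y z,
          (UT a b c)⁻¹ + UT h i j * (UT a b c)⁻¹ * UT e f g = UT x y z := by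
        rw [UT_inv ha, UT_mul, UT_mul, UT_add]
        exact ⟨_, _, _, rfl⟩
      exact sympl a b c e f g _ _ ⟨h, i, j, rfl⟩ hDut hrel
    · have ha : a ≠ 0 := isUnit_UT.mp hU
      have hdet1 : IsUnit (UT a b c).det := (Matrix.isUnit_iff_isUnit_det _).mp hU
      have hA : UT a b c * (UT a b c)⁻¹ = 1 := Matrix.mul_nonsing_inv _ hdet1
      have hcm : UT h i j * (UT a b c)⁻¹ = (UT a b c)⁻¹ * UT h i j := by
        rw [UT_inv ha]; exact UT_comm _ _ _ _ _ _
      have hBC : UT a b c * (-(UT a b c)⁻¹ + UT h i j * (UT a b c)⁻¹ * UT e f g)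
          = -1 + UT h i j * UT e f g := by
        rw [mul_add, mul_neg, hA]
        congr 1
        rw [hcm, ← mul_assoc, ← mul_assoc, hA, one_mul]
      have hrel : UT e f g * UT h i j
          - UT a b c * (-(UT a b c)⁻¹ + UT h i j * (UT a b c)⁻¹ * UT e f g) = 1 := by
        rw [hBC, UT_comm e f g h i j]
        abel
      have hCut : ∃ x y z,
          -(UT a b c)⁻¹ + UT h i j * (UT a b c)⁻¹ * UT e f g = UT x y z := by
        rw [UT_inv ha, UT_mul, UT_mul, UT_neg, UT_add]
        exact ⟨_, _, _, rfl⟩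
      exact sympl e f g a b c _ _ hCut ⟨h, i, j, rfl⟩ hrel
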